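/- Gautschi-type bound on a Beta function ratio: for real d₁ > 0 and d₂ > 1, B(d₁ + 1/2, d₂ - 1/2) / B(d₁, d₂) ≤ sqrt((d₁ + 1/2)/(d₂ - 1)), where B is the Beta function. -/

import Mathlib

/-!
Log-convexity of `Γ` at the midpoint of `x` and `x + 1` gives
`Γ(x + 1/2) ≤ √(Γ x · Γ(x + 1)) = √x · Γ x`, the `s = 1/2` case of Gautschi's inequality.
Applied at `x = d₁` and at `x = d₂ - 1`, it bounds the two Gamma factors of the numerator of the
Beta ratio by the corresponding factors of the denominator; the factors `Γ(d₁ + d₂)` cancel.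
-/

namespace Real

theorem Gamma_add_half_le_sqrt_mul_Gamma {x : ℝ} (hx : 0 < x) :
    Gamma (x + 1 / 2) ≤ √x * Gamma x := by
  have hconv := Gamma_mul_add_mul_le_rpow_Gamma_mul_rpow_Gamma hx (by linarith : 0 < x + 1)
    one_half_pos one_half_pos (add_halves 1)
  calc Gamma (x + 1 / 2) = Gamma (1 / 2 * x + 1 / 2 * (x + 1)) := by ring_nf
    _ ≤ Gamma x ^ (1 / 2 : ℝ) * Gamma (x + 1) ^ (1 / 2 : ℝ) := hconv
    _ = √(x * Gamma x ^ 2) := by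
      rw [← sqrt_eq_rpow, ← sqrt_eq_rpow, ← sqrt_mul (Gamma_pos_of_pos hx).le,
        Gamma_add_one hx.ne']
      ring_nf
    _ = √x * Gamma x := by rw [sqrt_mul hx.le, sqrt_sq (Gamma_pos_of_pos hx).le]

theorem sqrt_mul_Gamma_add_half_le_Gamma_add_one {x : ℝ} (hx : 0 < x) :
    √x * Gamma (x + 1 / 2) ≤ Gamma (x + 1) := by
  calc √x * Gamma (x + 1 / 2) ≤ √x * (√x * Gamma x) :=
        mul_le_mul_of_nonneg_left (Gamma_add_half_le_sqrt_mul_Gamma hx) (sqrt_nonneg x)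
    _ = Gamma (x + 1) := by rw [← mul_assoc, mul_self_sqrt hx.le, Gamma_add_one hx.ne']

end Real

open Real in
/-- Gautschi-type bound on a Beta function ratio: for `d₁ > 0` and `d₂ > 1`,
`B(d₁ + 1/2, d₂ - 1/2) / B(d₁, d₂) ≤ sqrt((d₁ + 1/2)/(d₂ - 1))`, where
`B(x,y) = Γ(x)Γ(y)/Γ(x+y)`. -/
theorem beta_ratio_gautschi_bound
    (d₁ d₂ : ℝ) (h₁ : 0 < d₁) (h₂ : 1 < d₂)
    (B : ℝ → ℝ → ℝ)
    (hB : ∀ x y : ℝ, B x y = Real.Gamma x * Real.Gamma y / Real.Gamma (x + y)) :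
    B (d₁ + 1 / 2) (d₂ - 1 / 2) / B d₁ d₂ ≤ Real.sqrt ((d₁ + 1 / 2) / (d₂ - 1)) := by
  have hd₂ : 0 < d₂ - 1 := by linarith
  have hΓsum := Gamma_pos_of_pos (by linarith : 0 < d₁ + d₂)
  have hnum₁ : Gamma (d₁ + 1 / 2) ≤ √(d₁ + 1 / 2) * Gamma d₁ :=
    (Gamma_add_half_le_sqrt_mul_Gamma h₁).trans (by gcongr; linarith)
  have hnum₂ : Gamma (d₂ - 1 / 2) ≤ Gamma d₂ / √(d₂ - 1) := by
    rw [le_div_iff₀' (sqrt_pos.2 hd₂)]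
    have h := sqrt_mul_Gamma_add_half_le_Gamma_add_one hd₂
    rwa [sub_add_cancel, show d₂ - 1 + 1 / 2 = d₂ - 1 / 2 by ring] at h
  rw [hB, hB, show d₁ + 1 / 2 + (d₂ - 1 / 2) = d₁ + d₂ by ring, div_div_div_cancel_right₀ hΓsum.ne',
    div_le_iff₀ (by positivity), sqrt_div' _ hd₂.le]
  calc Gamma (d₁ + 1 / 2) * Gamma (d₂ - 1 / 2)
      ≤ (√(d₁ + 1 / 2) * Gamma d₁) * (Gamma d₂ / √(d₂ - 1)) :=
        mul_le_mul hnum₁ hnum₂ (Gamma_pos_of_pos (by linarith)).le (by positivity)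
    _ = √(d₁ + 1 / 2) / √(d₂ - 1) * (Gamma d₁ * Gamma d₂) := by ring
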